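/- If S₁ is a UPB on H_{A₁} ⊗ H_{B₁} with members ψ_i¹ (i = 1,...,l₁) and S₂ is a UPB on H_{A₂} ⊗ H_{B₂} with members ψ_j² (j = 1,...,l₂), then the set {ψ_i¹ ⊗ ψ_j²} of l₁l₂ product states, viewed in (H_{A₁} ⊗ H_{A₂}) ⊗ (H_{B₁} ⊗ H_{B₂}) with Alice holding the A₁A₂ factors and Bob the B₁B₂ factors, is a UPB. -/

import Mathlib

/-!
Let `a ⊗ b` be a product vector for the cut `A₁A₂ | B₁B₂` orthogonal to every
`(α¹ᵢ ⊗ α²ⱼ) ⊗ (β¹ᵢ ⊗ β²ⱼ)`. Fix a row `i` and contract the `A₁` factor of `a` with `α¹ᵢ` and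
the `B₁` factor of `b` with `β¹ᵢ`: the resulting product vector on `A₂ | B₂` is orthogonal to
all of `S₂`, so by unextendibility of `S₂` one of the two contractions vanishes. Hence every
coordinate slice `a(·, y)` and `b(·, y')` is orthogonal to `α¹ᵢ`, resp. `β¹ᵢ`, for each `i`;
choosing nonzero slices contradicts unextendibility of `S₁`.
-/

/-- The product vector x ⊗ y in ℂ^{d1} ⊗ ℂ^{d2} ≅ ℂ^{d1·d2}. -/
noncomputable def prodVec {d1 d2 : ℕ} (x : EuclideanSpace ℂ (Fin d1))
    (y : EuclideanSpace ℂ (Fin d2)) : EuclideanSpace ℂ (Fin d1 × Fin d2) :=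
  WithLp.toLp 2 (fun p => x p.1 * y p.2)

/-- `(⟨u| ⊗ 1) a`. -/
noncomputable def partialInner {d1 d2 : ℕ} (a : EuclideanSpace ℂ (Fin d1 × Fin d2))
    (u : EuclideanSpace ℂ (Fin d1)) : EuclideanSpace ℂ (Fin d2) :=
  WithLp.toLp 2 fun y => ∑ x, a (x, y) * starRingEnd ℂ (u x)

noncomputable def sliceSnd {d1 d2 : ℕ} (a : EuclideanSpace ℂ (Fin d1 × Fin d2))
    (y : Fin d2) : EuclideanSpace ℂ (Fin d1) :=
  WithLp.toLp 2 fun x => a (x, y)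

section Tensor

variable {d1 d2 : ℕ}

lemma inner_prodVec_prodVec (u u' : EuclideanSpace ℂ (Fin d1))
    (v v' : EuclideanSpace ℂ (Fin d2)) :
    (inner ℂ (prodVec u v) (prodVec u' v') : ℂ) = inner ℂ u u' * inner ℂ v v' := by
  simp only [PiLp.inner_apply, RCLike.inner_apply, prodVec, Fintype.sum_prod_type,
    map_mul, Finset.sum_mul_sum]
  exact Finset.sum_congr rfl fun x _ => Finset.sum_congr rfl fun y _ => by ring

lemma inner_prodVec_eq_inner_partialInner (a : EuclideanSpace ℂ (Fin d1 × Fin d2))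
    (u : EuclideanSpace ℂ (Fin d1)) (v : EuclideanSpace ℂ (Fin d2)) :
    (inner ℂ a (prodVec u v) : ℂ) = inner ℂ (partialInner a u) v := by
  simp only [PiLp.inner_apply, RCLike.inner_apply', prodVec, partialInner,
    Fintype.sum_prod_type, map_sum, map_mul, Complex.conj_conj, Finset.sum_mul]
  rw [Finset.sum_comm]
  exact Finset.sum_congr rfl fun x _ => Finset.sum_congr rfl fun y _ => by ring

lemma inner_sliceSnd (a : EuclideanSpace ℂ (Fin d1 × Fin d2))
    (u : EuclideanSpace ℂ (Fin d1)) (y : Fin d2) :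
    (inner ℂ (sliceSnd a y) u : ℂ) = starRingEnd ℂ (partialInner a u y) := by
  simp only [PiLp.inner_apply, RCLike.inner_apply', sliceSnd, partialInner,
    map_sum, map_mul, Complex.conj_conj]

lemma inner_sliceSnd_eq_zero_of_partialInner_eq_zero {a : EuclideanSpace ℂ (Fin d1 × Fin d2)}
    {u : EuclideanSpace ℂ (Fin d1)} (h : partialInner a u = 0) (y : Fin d2) :
    (inner ℂ (sliceSnd a y) u : ℂ) = 0 := by
  simp [inner_sliceSnd, h]

lemma exists_sliceSnd_ne_zero {a : EuclideanSpace ℂ (Fin d1 × Fin d2)} (ha : a ≠ 0) :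
    ∃ y, sliceSnd a y ≠ 0 := by
  contrapose! ha
  ext ⟨x, y⟩
  simpa [sliceSnd] using congrArg (· x) (ha y)

end Tensor

lemma inner_prodVec_eq_zero_or_of_orthogonal {ι κ : Type*} {a1 b1 a2 b2 : ℕ}
    {α1 : ι → EuclideanSpace ℂ (Fin a1)} {β1 : ι → EuclideanSpace ℂ (Fin b1)}
    {α2 : κ → EuclideanSpace ℂ (Fin a2)} {β2 : κ → EuclideanSpace ℂ (Fin b2)}
    (h1orth : ∀ i i', i ≠ i' →
      (inner ℂ (α1 i) (α1 i') : ℂ) = 0 ∨ (inner ℂ (β1 i) (β1 i') : ℂ) = 0)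
    (h2orth : ∀ j j', j ≠ j' →
      (inner ℂ (α2 j) (α2 j') : ℂ) = 0 ∨ (inner ℂ (β2 j) (β2 j') : ℂ) = 0)
    {i i' : ι} {j j' : κ} (hne : (i, j) ≠ (i', j')) :
    (inner ℂ (prodVec (α1 i) (α2 j)) (prodVec (α1 i') (α2 j')) : ℂ) = 0 ∨
      (inner ℂ (prodVec (β1 i) (β2 j)) (prodVec (β1 i') (β2 j')) : ℂ) = 0 := by
  simp only [inner_prodVec_prodVec]
  by_cases hi : i = i'
  · subst hi
    have hj : j ≠ j' := fun h => hne (h ▸ rfl)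
    rcases h2orth j j' hj with h | h <;> simp [h]
  · rcases h1orth i i' hi with h | h <;> simp [h]

lemma partialInner_eq_zero_or_of_unextendible {κ : Type*} {a1 b1 a2 b2 : ℕ}
    {α2 : κ → EuclideanSpace ℂ (Fin a2)} {β2 : κ → EuclideanSpace ℂ (Fin b2)}
    (h2upb : ¬ ∃ (a : EuclideanSpace ℂ (Fin a2)) (b : EuclideanSpace ℂ (Fin b2)),
      a ≠ 0 ∧ b ≠ 0 ∧ ∀ j, (inner ℂ a (α2 j) : ℂ) = 0 ∨ (inner ℂ b (β2 j) : ℂ) = 0)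
    {a : EuclideanSpace ℂ (Fin a1 × Fin a2)} {b : EuclideanSpace ℂ (Fin b1 × Fin b2)}
    {u : EuclideanSpace ℂ (Fin a1)} {v : EuclideanSpace ℂ (Fin b1)}
    (horth : ∀ j, (inner ℂ a (prodVec u (α2 j)) : ℂ) = 0 ∨
      (inner ℂ b (prodVec v (β2 j)) : ℂ) = 0) :
    partialInner a u = 0 ∨ partialInner b v = 0 := by
  by_contra! hne
  refine h2upb ⟨partialInner a u, partialInner b v, hne.1, hne.2, fun j => ?_⟩
  simpa only [inner_prodVec_eq_inner_partialInner] using horth j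

theorem stmt18_general (a1 b1 a2 b2 l1 l2 : ℕ)
    (α1 : Fin l1 → EuclideanSpace ℂ (Fin a1)) (β1 : Fin l1 → EuclideanSpace ℂ (Fin b1))
    (α2 : Fin l2 → EuclideanSpace ℂ (Fin a2)) (β2 : Fin l2 → EuclideanSpace ℂ (Fin b2))
    (h1orth : ∀ i j : Fin l1, i ≠ j →
      (inner ℂ (α1 i) (α1 j) : ℂ) = 0 ∨ (inner ℂ (β1 i) (β1 j) : ℂ) = 0)
    (h2orth : ∀ i j : Fin l2, i ≠ j →
      (inner ℂ (α2 i) (α2 j) : ℂ) = 0 ∨ (inner ℂ (β2 i) (β2 j) : ℂ) = 0)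
    (h1upb : ¬ ∃ (a : EuclideanSpace ℂ (Fin a1)) (b : EuclideanSpace ℂ (Fin b1)),
      a ≠ 0 ∧ b ≠ 0 ∧ ∀ i, (inner ℂ a (α1 i) : ℂ) = 0 ∨ (inner ℂ b (β1 i) : ℂ) = 0)
    (h2upb : ¬ ∃ (a : EuclideanSpace ℂ (Fin a2)) (b : EuclideanSpace ℂ (Fin b2)),
      a ≠ 0 ∧ b ≠ 0 ∧ ∀ j, (inner ℂ a (α2 j) : ℂ) = 0 ∨ (inner ℂ b (β2 j) : ℂ) = 0) :
    (∀ i i' : Fin l1, ∀ j j' : Fin l2, (i, j) ≠ (i', j') →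
      (inner ℂ (prodVec (α1 i) (α2 j)) (prodVec (α1 i') (α2 j')) : ℂ) = 0 ∨
      (inner ℂ (prodVec (β1 i) (β2 j)) (prodVec (β1 i') (β2 j')) : ℂ) = 0) ∧
    ¬ ∃ (a : EuclideanSpace ℂ (Fin a1 × Fin a2)) (b : EuclideanSpace ℂ (Fin b1 × Fin b2)),
      a ≠ 0 ∧ b ≠ 0 ∧ ∀ (i : Fin l1) (j : Fin l2),
        (inner ℂ a (prodVec (α1 i) (α2 j)) : ℂ) = 0 ∨
        (inner ℂ b (prodVec (β1 i) (β2 j)) : ℂ) = 0 := by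
  refine ⟨fun i i' j j' => inner_prodVec_eq_zero_or_of_orthogonal h1orth h2orth, ?_⟩
  rintro ⟨a, b, ha, hb, horth⟩
  have hrow (i : Fin l1) : partialInner a (α1 i) = 0 ∨ partialInner b (β1 i) = 0 :=
    partialInner_eq_zero_or_of_unextendible h2upb (horth i)
  obtain ⟨y, hy⟩ := exists_sliceSnd_ne_zero ha
  obtain ⟨y', hy'⟩ := exists_sliceSnd_ne_zero hb
  exact h1upb ⟨sliceSnd a y, sliceSnd b y', hy, hy', fun i =>
    (hrow i).imp (inner_sliceSnd_eq_zero_of_partialInner_eq_zero · y)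
      (inner_sliceSnd_eq_zero_of_partialInner_eq_zero · y')⟩

/-- Tensor products of bipartite UPBs are UPBs.  S₁ = {α1_i ⊗ β1_i} is a UPB on
ℂ^{a1} ⊗ ℂ^{b1}, S₂ = {α2_j ⊗ β2_j} on ℂ^{a2} ⊗ ℂ^{b2} (mutually orthogonal
nonzero product vectors, with no nonzero product vector orthogonal to all
members).  Then the l₁l₂ states (α1_i ⊗ α2_j) ⊗ (β1_i ⊗ β2_j), with Alice
holding ℂ^{a1} ⊗ ℂ^{a2} and Bob ℂ^{b1} ⊗ ℂ^{b2}, form a UPB: they are mutually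
orthogonal and no nonzero product vector (for the A|B cut) is orthogonal to all
of them. -/
theorem stmt18 (a1 b1 a2 b2 l1 l2 : ℕ)
    (α1 : Fin l1 → EuclideanSpace ℂ (Fin a1)) (β1 : Fin l1 → EuclideanSpace ℂ (Fin b1))
    (α2 : Fin l2 → EuclideanSpace ℂ (Fin a2)) (β2 : Fin l2 → EuclideanSpace ℂ (Fin b2))
    (h1ne : ∀ i, α1 i ≠ 0 ∧ β1 i ≠ 0) (h2ne : ∀ j, α2 j ≠ 0 ∧ β2 j ≠ 0)
    (h1orth : ∀ i j : Fin l1, i ≠ j →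
      (inner ℂ (α1 i) (α1 j) : ℂ) = 0 ∨ (inner ℂ (β1 i) (β1 j) : ℂ) = 0)
    (h2orth : ∀ i j : Fin l2, i ≠ j →
      (inner ℂ (α2 i) (α2 j) : ℂ) = 0 ∨ (inner ℂ (β2 i) (β2 j) : ℂ) = 0)
    (h1upb : ¬ ∃ (a : EuclideanSpace ℂ (Fin a1)) (b : EuclideanSpace ℂ (Fin b1)),
      a ≠ 0 ∧ b ≠ 0 ∧ ∀ i, (inner ℂ a (α1 i) : ℂ) = 0 ∨ (inner ℂ b (β1 i) : ℂ) = 0)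
    (h2upb : ¬ ∃ (a : EuclideanSpace ℂ (Fin a2)) (b : EuclideanSpace ℂ (Fin b2)),
      a ≠ 0 ∧ b ≠ 0 ∧ ∀ j, (inner ℂ a (α2 j) : ℂ) = 0 ∨ (inner ℂ b (β2 j) : ℂ) = 0) :
    (∀ i i' : Fin l1, ∀ j j' : Fin l2, (i, j) ≠ (i', j') →
      (inner ℂ (prodVec (α1 i) (α2 j)) (prodVec (α1 i') (α2 j')) : ℂ) = 0 ∨
      (inner ℂ (prodVec (β1 i) (β2 j)) (prodVec (β1 i') (β2 j')) : ℂ) = 0) ∧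
    ¬ ∃ (a : EuclideanSpace ℂ (Fin a1 × Fin a2)) (b : EuclideanSpace ℂ (Fin b1 × Fin b2)),
      a ≠ 0 ∧ b ≠ 0 ∧ ∀ (i : Fin l1) (j : Fin l2),
        (inner ℂ a (prodVec (α1 i) (α2 j)) : ℂ) = 0 ∨
        (inner ℂ b (prodVec (β1 i) (β2 j)) : ℂ) = 0 :=
  stmt18_general a1 b1 a2 b2 l1 l2 α1 β1 α2 β2 h1orth h2orth h1upb h2upb
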